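/- Let V ⊆ ℝmax^n be a max-plus subsemimodule stable under directed sups and filtered infs, and for x ∈ ℝmax^n define the projection P_V(x) as the componentwise supremum of {v ∈ V : v ≤ x}. Then P_V(x) ∈ V for every x ∈ ℝmax^n, and P_V preserves directed sups and filtered infs: for every nonempty directed subset D ⊆ ℝmax^n bounded from above, P_V(sup D) = sup of {P_V(x) : x ∈ D}; and for every nonempty filtered subset F ⊆ ℝmax^n, P_V(inf F) = inf of {P_V(x) : x ∈ F}. -/

import Mathlib

noncomputable section

/-- `ℝmax = ℝ ∪ {-∞}`, the max-plus semifield. -/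
abbrev Rmax := WithBot ℝ

/-- a max-plus subsemimodule of `ℝmax^n`: contains the bottom vector, stable
under componentwise max and under addition of scalars. -/
def MPSubmodule {n : ℕ} (V : Set (Fin n → Rmax)) : Prop :=
  (fun _ => ⊥) ∈ V ∧ (∀ x ∈ V, ∀ y ∈ V, x ⊔ y ∈ V) ∧
    (∀ x ∈ V, ∀ lam : Rmax, (fun i => x i + lam) ∈ V)

/-- stability under sups of bounded directed subsets. -/
def DirStable {n : ℕ} (C : Set (Fin n → Rmax)) : Prop :=
  ∀ D ⊆ C, D.Nonempty → DirectedOn (· ≤ ·) D → BddAbove D → sSup D ∈ C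

/-- stability under infs of filtered subsets. -/
def FiltStable {n : ℕ} (C : Set (Fin n → Rmax)) : Prop :=
  ∀ F ⊆ C, F.Nonempty → DirectedOn (· ≥ ·) F → sInf F ∈ C

/-- the canonical projection onto `V`: `P_V(x) = sup {v ∈ V : v ≤ x}`. -/
def projV {n : ℕ} (V : Set (Fin n → Rmax)) (x : Fin n → Rmax) : Fin n → Rmax :=
  sSup {v | v ∈ V ∧ v ≤ x}

/-!
`P_V(x)` is the supremum of `{v ∈ V | v ≤ x}`, a set that is nonempty, bounded by `x`, and
directed because `V` is closed under `max`; hence `P_V(x) ∈ V`, and `P_V(x)` is the greatest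
element of `V` below `x`. For a filtered `F`, the images `P_V(x)`, `x ∈ F`, form a filtered subset
of `V`, so their infimum lies in `V` and is below `inf F`, hence below `P_V(inf F)`. For a directed
`D` and `v ∈ V` with `v ≤ sup D`, each of the finitely many coordinates of `v - ε` is exceeded by
some element of `D`, and directedness yields one `z ∈ D` above `v - ε`; as `v - ε ∈ V`, this gives
`v - ε ≤ P_V(z)`, and letting `ε → 0` shows `P_V(sup D) ≤ sup P_V(D)`.
-/
namespace Rmax

theorem le_of_forall_pos_add_neg_le {a b : Rmax} (h : ∀ ε : ℝ, 0 < ε → a + ↑(-ε) ≤ b) :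
    a ≤ b := by
  induction a using WithBot.recBotCoe with
  | bot => exact bot_le
  | coe r =>
    induction b using WithBot.recBotCoe with
    | bot => exact absurd (h 1 one_pos) (by simp [← WithBot.coe_add])
    | coe s =>
      refine WithBot.coe_le_coe.2 (le_of_forall_pos_le_add fun ε hε => ?_)
      have := WithBot.coe_le_coe.1 (h ε hε)
      linarith

theorem exists_mem_add_neg_le_of_le_csSup {s : Set Rmax} (hs : s.Nonempty) {a : Rmax}
    (ha : a ≤ sSup s) {ε : ℝ} (hε : 0 < ε) : ∃ b ∈ s, a + ↑(-ε) ≤ b := by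
  induction a using WithBot.recBotCoe with
  | bot => exact ⟨hs.some, hs.some_mem, by simp⟩
  | coe r =>
    have hlt : ((r + -ε : ℝ) : Rmax) < sSup s :=
      lt_of_lt_of_le (WithBot.coe_lt_coe.2 (by linarith)) ha
    obtain ⟨b, hb, hrb⟩ := exists_lt_of_lt_csSup hs hlt
    exact ⟨b, hb, hrb.le⟩

theorem exists_mem_add_neg_le_of_le_sSup_of_directedOn {ι : Type*} [Finite ι]
    {D : Set (ι → Rmax)} (hne : D.Nonempty) (hD : DirectedOn (· ≤ ·) D) {v : ι → Rmax}
    (hv : v ≤ sSup D) {ε : ℝ} (hε : 0 < ε) : ∃ z ∈ D, ∀ i, v i + ↑(-ε) ≤ z i := by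
  have hcoord : ∀ i, ∃ x : D, v i + ↑(-ε) ≤ (x : ι → Rmax) i := by
    intro i
    have hvi : v i ≤ sSup (Function.eval i '' D) := by
      simpa only [sSup_apply, Set.image_eq_range, sSup_range] using hv i
    obtain ⟨_, ⟨x, hx, rfl⟩, hle⟩ := exists_mem_add_neg_le_of_le_csSup (hne.image _) hvi hε
    exact ⟨⟨x, hx⟩, hle⟩
  choose g hg using hcoord
  have : Nonempty D := hne.to_subtype
  obtain ⟨z, hz⟩ := (directedOn_iff_directed.1 hD).finite_le g
  exact ⟨z, z.2, fun i => (hg i).trans (hz i i)⟩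

end Rmax

theorem Pi.csSup_le' {ι α : Type*} [ConditionallyCompleteLinearOrderBot α] {s : Set (ι → α)}
    {a : ι → α} (h : a ∈ upperBounds s) : sSup s ≤ a := fun i => by
  simpa only [sSup_apply] using ciSup_le' fun f : s => h f.2 i

section projV

variable {n : ℕ} {V : Set (Fin n → Rmax)}

theorem projV_le (x : Fin n → Rmax) : projV V x ≤ x :=
  Pi.csSup_le' fun _ hv => hv.2

theorem le_projV {x v : Fin n → Rmax} (hv : v ∈ V) (hvx : v ≤ x) : v ≤ projV V x :=
  le_csSup ⟨x, fun _ hw => hw.2⟩ ⟨hv, hvx⟩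

theorem projV_mono : Monotone (projV V) := fun _ _ hxy =>
  Pi.csSup_le' fun _ hv => le_projV hv.1 (hv.2.trans hxy)

theorem projV_mem (hmod : MPSubmodule V) (hdir : DirStable V) (x : Fin n → Rmax) :
    projV V x ∈ V := by
  obtain ⟨hbot, hsup, -⟩ := hmod
  refine hdir _ (fun _ hv => hv.1) ⟨_, hbot, fun _ => bot_le⟩ ?_ ⟨x, fun _ hv => hv.2⟩
  exact fun v hv w hw =>
    ⟨v ⊔ w, ⟨hsup v hv.1 w hw.1, sup_le hv.2 hw.2⟩, le_sup_left, le_sup_right⟩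

theorem projV_sSup_of_directedOn (hadd : ∀ v ∈ V, ∀ lam : Rmax, (fun i => v i + lam) ∈ V)
    {D : Set (Fin n → Rmax)} (hne : D.Nonempty) (hD : DirectedOn (· ≤ ·) D)
    (hbdd : BddAbove D) : projV V (sSup D) = sSup (projV V '' D) := by
  have hub : projV V (sSup D) ∈ upperBounds (projV V '' D) :=
    Set.forall_mem_image.2 fun x hx => projV_mono (le_csSup hbdd hx)
  refine le_antisymm (Pi.csSup_le' fun v ⟨hvV, hvD⟩ i => ?_) (csSup_le (hne.image _) hub)
  refine Rmax.le_of_forall_pos_add_neg_le fun ε hε => ?_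
  obtain ⟨z, hz, hvz⟩ := Rmax.exists_mem_add_neg_le_of_le_sSup_of_directedOn hne hD hvD hε
  calc v i + ↑(-ε) ≤ projV V z i := le_projV (hadd v hvV _) hvz i
    _ ≤ sSup (projV V '' D) i := le_csSup ⟨_, hub⟩ ⟨z, hz, rfl⟩ i

theorem projV_sInf_of_directedOn_ge (hmem : ∀ x, projV V x ∈ V) (hfilt : FiltStable V)
    {F : Set (Fin n → Rmax)} (hne : F.Nonempty) (hF : DirectedOn (· ≥ ·) F) :
    projV V (sInf F) = sInf (projV V '' F) := by
  have himage : DirectedOn (· ≥ ·) (projV V '' F) := by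
    rintro _ ⟨x, hx, rfl⟩ _ ⟨y, hy, rfl⟩
    obtain ⟨z, hz, hzx, hzy⟩ := hF x hx y hy
    exact ⟨projV V z, ⟨z, hz, rfl⟩, projV_mono hzx, projV_mono hzy⟩
  refine le_antisymm ?_ (le_projV ?_ ?_)
  · exact le_csInf (hne.image _) (Set.forall_mem_image.2 fun x hx =>
      projV_mono (csInf_le (OrderBot.bddBelow F) hx))
  · exact hfilt _ (Set.image_subset_iff.2 fun x _ => hmem x) (hne.image _) himage
  · exact le_csInf hne fun x hx =>
      (csInf_le (OrderBot.bddBelow _) (Set.mem_image_of_mem (projV V) hx)).trans (projV_le x)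

end projV

/-- **The projector onto a max-plus subsemimodule of `ℝmax^n` stable under
directed sups and filtered infs maps into `V` and preserves directed sups and
filtered infs.** -/
theorem stmt12 {n : ℕ} (V : Set (Fin n → Rmax)) (hmod : MPSubmodule V)
    (hdir : DirStable V) (hfilt : FiltStable V) :
    (∀ x, projV V x ∈ V) ∧
    (∀ D : Set (Fin n → Rmax), D.Nonempty → DirectedOn (· ≤ ·) D → BddAbove D →
      projV V (sSup D) = sSup (projV V '' D)) ∧
    (∀ F : Set (Fin n → Rmax), F.Nonempty → DirectedOn (· ≥ ·) F →
      projV V (sInf F) = sInf (projV V '' F)) := by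
  have hmem : ∀ x, projV V x ∈ V := projV_mem hmod hdir
  exact ⟨hmem, fun _ hne hD hbdd => projV_sSup_of_directedOn hmod.2.2 hne hD hbdd,
    fun _ hne hF => projV_sInf_of_directedOn_ge hmem hfilt hne hF⟩

end
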